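/- For p = (x, y, z, t) ∈ ℝ⁴ let g(p) be the 4×4 real symmetric matrix with rows [[1, 0, −2t, 0], [0, 0, 1, 0], [−2t, 1, 2t², 0], [0, 0, 0, 1]] (indices 1,2,3,4 corresponding to x, y, z, t). Then for every p: (i) g(p) is invertible with inverse the matrix with rows [[1, 2t, 0, 0], [2t, 2t², 1, 0], [0, 1, 0, 0], [0, 0, 0, 1]]; (ii) the Christoffel symbols Γ^k_{ij}(p) = (1/2)·Σ_l (g(p)⁻¹)_{kl}·(∂_i g_{jl}(p) + ∂_j g_{il}(p) − ∂_l g_{ij}(p)) (where ∂_i denotes the partial derivative in the i-th coordinate direction) satisfy Γ⁴₁₃ = Γ⁴₃₁ = 1, Γ²₁₄ = Γ²₄₁ = −1, Γ⁴₃₃ = −2t, Γ¹₃₄ = Γ¹₄₃ = −1, and all other components Γ^k_{ij}(p) are zero. -/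

import Mathlib

/-- Partial derivative of a scalar function on ℝⁿ (coordinates `Fin n → ℝ`) in the
`i`-th coordinate direction. -/
noncomputable def coordPartialDeriv {n : ℕ} (i : Fin n) (f : (Fin n → ℝ) → ℝ)
    (p : Fin n → ℝ) : ℝ :=
  fderiv ℝ f p (Pi.single i 1)

/-- Matrix of the anti-Mach metric ds² = dx² − 4t dx dz + 2 dy dz + 2t² dz² + dt²
in the coordinates (x, y, z, t) = (p 0, p 1, p 2, p 3). -/
noncomputable def antiMachMetric (p : Fin 4 → ℝ) : Matrix (Fin 4) (Fin 4) ℝ :=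
  !![1, 0, -2 * p 3, 0;
     0, 0, 1, 0;
     -2 * p 3, 1, 2 * (p 3) ^ 2, 0;
     0, 0, 0, 1]

/-- Claimed inverse of the anti-Mach metric matrix. -/
noncomputable def antiMachMetricInv (p : Fin 4 → ℝ) : Matrix (Fin 4) (Fin 4) ℝ :=
  !![1, 2 * p 3, 0, 0;
     2 * p 3, 2 * (p 3) ^ 2, 1, 0;
     0, 1, 0, 0;
     0, 0, 0, 1]

/-- Christoffel symbols of the second kind of the anti-Mach metric:
Γ^k_{ij} = (1/2) Σ_l (g⁻¹)_{kl} (∂_i g_{jl} + ∂_j g_{il} − ∂_l g_{ij}). -/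
noncomputable def antiMachChristoffel (k i j : Fin 4) (p : Fin 4 → ℝ) : ℝ :=
  (1 / 2) * ∑ l, (antiMachMetric p)⁻¹ k l *
    (coordPartialDeriv i (fun q => antiMachMetric q j l) p
      + coordPartialDeriv j (fun q => antiMachMetric q i l) p
      - coordPartialDeriv l (fun q => antiMachMetric q i j) p)

lemma cpd_const {n : ℕ} (i : Fin n) (c : ℝ) (p : Fin n → ℝ) :
    coordPartialDeriv i (fun _ => c) p = 0 := by
  simp [coordPartialDeriv]

lemma cpd_lin (i : Fin 4) (p : Fin 4 → ℝ) :
    coordPartialDeriv i (fun q => -2 * q 3) p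
      = -2 * (Pi.single i 1 : Fin 4 → ℝ) 3 := by
  have h : HasFDerivAt (fun q : Fin 4 → ℝ => -2 * q 3)
      ((-2 : ℝ) • (ContinuousLinearMap.proj 3 : (Fin 4 → ℝ) →L[ℝ] ℝ)) p :=
    ((ContinuousLinearMap.proj 3 : (Fin 4 → ℝ) →L[ℝ] ℝ).hasFDerivAt).const_mul (-2)
  rw [coordPartialDeriv, h.fderiv]; simp

lemma cpd_sq (i : Fin 4) (p : Fin 4 → ℝ) :
    coordPartialDeriv i (fun q => 2 * q 3 ^ 2) p
      = 4 * p 3 * (Pi.single i 1 : Fin 4 → ℝ) 3 := by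
  have h1 : HasFDerivAt (fun q : Fin 4 → ℝ => q 3)
      (ContinuousLinearMap.proj 3 : (Fin 4 → ℝ) →L[ℝ] ℝ) p :=
    (ContinuousLinearMap.proj 3 : (Fin 4 → ℝ) →L[ℝ] ℝ).hasFDerivAt
  have h : HasFDerivAt (fun q : Fin 4 → ℝ => 2 * q 3 ^ 2)
      ((4 * p 3) • (ContinuousLinearMap.proj 3 : (Fin 4 → ℝ) →L[ℝ] ℝ)) p := by
    have := (h1.mul h1).const_mul (2:ℝ)
    have e1 : (fun q : Fin 4 → ℝ => 2 * q 3 ^ 2) = fun y => 2 * ((fun q : Fin 4 → ℝ => q 3) * fun q : Fin 4 → ℝ => q 3) y := by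
      ext q; simp; ring
    have e2 : ((4 * p 3) • (ContinuousLinearMap.proj 3 : (Fin 4 → ℝ) →L[ℝ] ℝ)) = (2:ℝ) • (p 3 • (ContinuousLinearMap.proj 3 : (Fin 4 → ℝ) →L[ℝ] ℝ) + p 3 • ContinuousLinearMap.proj 3) := by
      ext v; simp [smul_smul]; ring
    rw [e1, e2]; exact this
  rw [coordPartialDeriv, h.fderiv]; simp [mul_comm]

set_option maxHeartbeats 2000000 in
/-- The anti-Mach metric matrix is invertible with the stated inverse, and its only
nonvanishing Christoffel symbols are Γ⁴₁₃ = Γ⁴₃₁ = 1, Γ²₁₄ = Γ²₄₁ = −1, Γ⁴₃₃ = −2t,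
Γ¹₃₄ = Γ¹₄₃ = −1 (indices 1,2,3,4 ↦ 0,1,2,3). -/
theorem antiMach_christoffel_symbols :
    ∀ p : Fin 4 → ℝ,
      antiMachMetric p * antiMachMetricInv p = 1 ∧
      antiMachMetricInv p * antiMachMetric p = 1 ∧
      antiMachChristoffel 3 0 2 p = 1 ∧ antiMachChristoffel 3 2 0 p = 1 ∧
      antiMachChristoffel 1 0 3 p = -1 ∧ antiMachChristoffel 1 3 0 p = -1 ∧
      antiMachChristoffel 3 2 2 p = -2 * p 3 ∧
      antiMachChristoffel 0 2 3 p = -1 ∧ antiMachChristoffel 0 3 2 p = -1 ∧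
      (∀ k i j : Fin 4,
        (k, i, j) ∉ ({(3, 0, 2), (3, 2, 0), (1, 0, 3), (1, 3, 0), (3, 2, 2),
          (0, 2, 3), (0, 3, 2)} : Set (Fin 4 × Fin 4 × Fin 4)) →
        antiMachChristoffel k i j p = 0) := by
  intro p
  have h1 : antiMachMetric p * antiMachMetricInv p = 1 := by
    ext i j
    fin_cases i <;> fin_cases j <;>
      simp [antiMachMetric, antiMachMetricInv, Matrix.mul_apply, Fin.sum_univ_four,
        Matrix.one_apply, Matrix.vecHead, Matrix.vecTail] <;> ring
  have h2 : antiMachMetricInv p * antiMachMetric p = 1 := by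
    ext i j
    fin_cases i <;> fin_cases j <;>
      simp [antiMachMetric, antiMachMetricInv, Matrix.mul_apply, Fin.sum_univ_four,
        Matrix.one_apply, Matrix.vecHead, Matrix.vecTail] <;> ring
  have hinv : (antiMachMetric p)⁻¹ = antiMachMetricInv p := Matrix.inv_eq_right_inv h1
  have hC : ∀ k i j : Fin 4, ∀ v : ℝ,
      ((1 / 2) * ∑ l, antiMachMetricInv p k l *
        (coordPartialDeriv i (fun q => antiMachMetric q j l) p
          + coordPartialDeriv j (fun q => antiMachMetric q i l) p
          - coordPartialDeriv l (fun q => antiMachMetric q i j) p) = v) →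
      antiMachChristoffel k i j p = v := by
    intro k i j v hv
    rw [antiMachChristoffel, hinv]
    exact hv
  refine ⟨h1, h2, ?_, ?_, ?_, ?_, ?_, ?_, ?_, ?_⟩
  · exact hC _ _ _ _ (by simp [Fin.sum_univ_four, antiMachMetric, antiMachMetricInv,
      cpd_const, cpd_lin, cpd_sq, Pi.single_apply, -neg_mul])
  · exact hC _ _ _ _ (by simp [Fin.sum_univ_four, antiMachMetric, antiMachMetricInv,
      cpd_const, cpd_lin, cpd_sq, Pi.single_apply, -neg_mul])
  · exact hC _ _ _ _ (by simp [Fin.sum_univ_four, antiMachMetric, antiMachMetricInv,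
      cpd_const, cpd_lin, cpd_sq, Pi.single_apply, -neg_mul])
  · exact hC _ _ _ _ (by simp [Fin.sum_univ_four, antiMachMetric, antiMachMetricInv,
      cpd_const, cpd_lin, cpd_sq, Pi.single_apply, -neg_mul])
  · exact hC _ _ _ _ (by simp [Fin.sum_univ_four, antiMachMetric, antiMachMetricInv,
      cpd_const, cpd_lin, cpd_sq, Pi.single_apply, -neg_mul]; ring)
  · exact hC _ _ _ _ (by simp [Fin.sum_univ_four, antiMachMetric, antiMachMetricInv,
      cpd_const, cpd_lin, cpd_sq, Pi.single_apply, -neg_mul])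
  · exact hC _ _ _ _ (by simp [Fin.sum_univ_four, antiMachMetric, antiMachMetricInv,
      cpd_const, cpd_lin, cpd_sq, Pi.single_apply, -neg_mul])
  · intro k i j h
    fin_cases k <;> fin_cases i <;> fin_cases j <;>
      first
        | (exfalso; apply h; simp; done)
        | (apply hC;
           simp [Fin.sum_univ_four, antiMachMetric, antiMachMetricInv, cpd_const,
             cpd_lin, cpd_sq, Pi.single_apply, -neg_mul];
           try ring)
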